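/- arXiv:2012.04426 — 6 statements merged into one kernel-verified Lean document; each statement's English description precedes it below -/
import Mathlib

section
/- Under the trust-bias click model, the intervention-oblivious per-click correction is an unbiased indicator of relevance: for any logging policy π and item d with E_ȳ[α_d | π] ≠ 0, the expectation over the displayed ranking ȳ ~ π and the (Bernoulli) click c(d) of the quantity (c(d) − E_ȳ[β_d | π]) / E_ȳ[α_d | π] equals r(d). -/
/-- The intervention-oblivious per-click correction
`(c(d) − E_ȳ[β_d | π]) / E_ȳ[α_d | π]` is an unbiased indicator of relevance:
its expectation over the displayed ranking `ȳ ~ π` and the Bernoulli click `c(d)`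
(with parameter `α(d,ȳ)·r(d) + β(d,ȳ)`) equals `r(d)`. -/
theorem intervention_oblivious_correction_unbiased
    {D Y : Type*} [Fintype D] [Fintype Y]
    (π : Y → ℝ) (hπ0 : ∀ y, 0 ≤ π y) (hπ1 : ∑ y, π y = 1)
    (α β : D → Y → ℝ) (r : D → ℝ)
    (hr : ∀ d, 0 ≤ r d ∧ r d ≤ 1)
    (hclick : ∀ d y, 0 ≤ α d y * r d + β d y ∧ α d y * r d + β d y ≤ 1)
    (d : D)
    (hα : ∑ y, π y * α d y ≠ 0) :
    ∑ y, π y *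
        ((α d y * r d + β d y) *
            ((1 - ∑ y', π y' * β d y') / (∑ y', π y' * α d y')) +
          (1 - (α d y * r d + β d y)) *
            ((0 - ∑ y', π y' * β d y') / (∑ y', π y' * α d y')))
      = r d := by
  set A := ∑ y', π y' * α d y' with hA
  set B := ∑ y', π y' * β d y' with hB
  have key : ∀ y, π y *
      ((α d y * r d + β d y) * ((1 - B) / A) +
        (1 - (α d y * r d + β d y)) * ((0 - B) / A))
      = (π y * α d y * r d + π y * β d y - π y * B) / A := by
    intro y
    field_simp
    ring
  rw [Finset.sum_congr rfl (fun y _ => key y), ← Finset.sum_div,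
    div_eq_iff hα]
  have h1 : ∑ y, (π y * α d y * r d + π y * β d y - π y * B)
      = (∑ y, π y * α d y) * r d + (∑ y, π y * β d y) - (∑ y, π y) * B := by
    rw [Finset.sum_sub_distrib, Finset.sum_add_distrib, ← Finset.sum_mul, ← Finset.sum_mul]
  rw [h1, hπ1, ← hA, ← hB]
  ring
end

section
/- (Unbiasedness of the intervention-oblivious estimator.) Consider T timesteps with logging policies π_1, …, π_T (possibly all distinct, i.e., online interventions may occur). Assume that for every timestep t, every query q, and every item d ∈ D_q, the expected bias parameter E_ȳ[α_d | π_t, q] is nonzero. Then the expected value of the estimated reward R̂_IO(π | D) = (1/T) Σ_{t=1}^T Σ_{d ∈ D_{q_t}} λ(d | q_t) · (c_t(d) − E_ȳ[β_d | π_t, q_t]) / E_ȳ[α_d | π_t, q_t], taken over the i.i.d. queries q_t ~ P(q), the displayed rankings ȳ_t ~ π_t(· | q_t), and the clicks c_t, equals the true reward R(π) = Σ_q P(q) Σ_{d ∈ D_q} λ(d | q) · r(d, q). -/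
/-!
Under the product distribution of the `T` independent (query, ranking, clicks) triples, the
expectation of a sum of functions of single timesteps is the sum of their marginal expectations,
so it suffices to treat one timestep `t`. There, given the displayed ranking `y`, the click on `d`
has mean `α(d,y,q) r(d,q) + β(d,y,q)`; averaging over `y ~ π_t(·|q)` turns this into
`E[α_d | π_t, q] r(d,q) + E[β_d | π_t, q]`, which the affine correction of the estimator maps
back to `r(d,q)`.
-/

open Finset

theorem sum_pi_prod_mul_apply {R ι X : Type*} [CommSemiring R] [Fintype ι] [DecidableEq ι]
    [Fintype X] {w : ι → X → R} (hw : ∀ i, ∑ x, w i x = 1) (i : ι) (f : X → R) :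
    ∑ xs : ι → X, (∏ j, w j (xs j)) * f (xs i) = ∑ x, w i x * f x := by
  -- Absorb `f` into the `i`-th factor; the sum of products then factors into a product of sums.
  set g := Function.update w i fun x => w i x * f x
  have hg : ∀ xs : ι → X, (∏ j, w j (xs j)) * f (xs i) = ∏ j, g j (xs j) := by
    intro xs
    rw [Fintype.prod_eq_mul_prod_compl i, Fintype.prod_eq_mul_prod_compl i fun j => g j (xs j),
      mul_right_comm]
    congr 1
    · simp [g]
    · exact prod_congr rfl fun j hj => by simp [g, Function.update_of_ne (by simpa using hj)]
  simp_rw [hg, ← Fintype.prod_sum]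
  rw [Fintype.prod_eq_mul_prod_compl i, prod_eq_one fun j hj => ?_, mul_one]
  · simp [g]
  · rw [show g j = w j from Function.update_of_ne (by simpa using hj) _ _, hw]

theorem sum_pi_prod_mul_sum_apply {R ι X : Type*} [CommSemiring R] [Fintype ι] [DecidableEq ι]
    [Fintype X] {w : ι → X → R} (hw : ∀ i, ∑ x, w i x = 1) (s : Finset ι) (f : ι → X → R) :
    ∑ xs : ι → X, (∏ j, w j (xs j)) * ∑ i ∈ s, f i (xs i) = ∑ i ∈ s, ∑ x, w i x * f i x := by
  simp_rw [mul_sum]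
  rw [sum_comm]
  exact sum_congr rfl fun i _ => sum_pi_prod_mul_apply hw i (f i)

theorem sum_pi_prod_eq_one {R ι X : Type*} [CommSemiring R] [Fintype ι] [DecidableEq ι]
    [Fintype X] {w : ι → X → R} (hw : ∀ i, ∑ x, w i x = 1) :
    ∑ xs : ι → X, ∏ j, w j (xs j) = 1 := by
  rw [← Fintype.prod_sum, prod_congr rfl fun i _ => hw i, prod_const_one]

theorem sum_pi_prod_mul_average {K X : Type*} [Field K] [CharZero K] [Fintype X] {n : ℕ}
    (hn : 0 < n) {w : Fin n → X → K} (hw : ∀ i, ∑ x, w i x = 1) {f : Fin n → X → K} {c : K}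
    (hf : ∀ i, ∑ x, w i x * f i x = c) :
    ∑ xs : Fin n → X, (∏ j, w j (xs j)) * ((1 / (n : K)) * ∑ i, f i (xs i)) = c := by
  simp_rw [mul_left_comm _ (1 / _ : K), ← mul_sum, sum_pi_prod_mul_sum_apply hw, hf, sum_const,
    card_univ, Fintype.card_fin, nsmul_eq_mul]
  rw [one_div, inv_mul_cancel_left₀ (Nat.cast_ne_zero.mpr hn.ne')]

theorem Fintype.sum_arrow_prod_prod_type {R ι A B C : Type*} [AddCommMonoid R] [Fintype ι]
    [DecidableEq ι] [Fintype A] [Fintype B] [Fintype C]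
    (H : (ι → A × B × C) → R) :
    ∑ zs, H zs = ∑ as : ι → A, ∑ bs : ι → B, ∑ cs : ι → C, H fun i => (as i, bs i, cs i) := by
  rw [← (Equiv.arrowProdEquivProdArrow ι (fun _ => A) fun _ => B × C).symm.sum_comp,
    Fintype.sum_prod_type]
  refine Fintype.sum_congr _ _ fun as => ?_
  rw [← (Equiv.arrowProdEquivProdArrow ι (fun _ => B) fun _ => C).symm.sum_comp,
    Fintype.sum_prod_type]
  rfl

theorem sum_mul_affine_sub_div {K Y : Type*} [Field K] [Fintype Y] {w : Y → K}
    (hw : ∑ y, w y = 1) (a b : Y → K) (hA : ∑ y, w y * a y ≠ 0) (x : K) :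
    ∑ y, w y * ((a y * x + b y - ∑ y', w y' * b y') / ∑ y', w y' * a y') = x := by
  simp_rw [← mul_div_assoc, ← sum_div, mul_sub, mul_add, sum_sub_distrib, sum_add_distrib,
    ← sum_mul, hw, ← mul_assoc, ← sum_mul]
  field_simp
  ring

def bernoulliWeight (p : ℝ) (b : Bool) : ℝ := if b then p else 1 - p

theorem sum_bernoulliWeight (p : ℝ) : ∑ b, bernoulliWeight p b = 1 := by
  simp [bernoulliWeight]

theorem sum_bernoulliWeight_mul_indicator (p u e a : ℝ) :
    ∑ b, bernoulliWeight p b * (u * (((if b then 1 else 0) - e) / a)) = u * ((p - e) / a) := by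
  simp only [Fintype.sum_bool, bernoulliWeight, if_true, Bool.false_eq_true, if_false]
  ring

noncomputable section TrustBias

variable {Q D Y : Type*} [Fintype Q] [Fintype D] [DecidableEq D] [Fintype Y]

def clickProb (α β : D → Y → Q → ℝ) (r : D → Q → ℝ) (d : D) (y : Y) (q : Q) : ℝ :=
  α d y q * r d q + β d y q

def expectedBias (π : Q → Y → ℝ) (a : D → Y → Q → ℝ) (d : D) (q : Q) : ℝ :=
  ∑ y, π q y * a d y q

-- `z = (q, y, c)` is the query, displayed ranking and click vector of a single timestep.
def stepWeight (P : Q → ℝ) (π : Q → Y → ℝ) (α β : D → Y → Q → ℝ) (r : D → Q → ℝ)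
    (z : Q × Y × (D → Bool)) : ℝ :=
  P z.1 * π z.1 z.2.1 * ∏ d, bernoulliWeight (clickProb α β r d z.2.1 z.1) (z.2.2 d)

def ioEstimate (Dq : Q → Finset D) (π : Q → Y → ℝ) (α β : D → Y → Q → ℝ) (lam : D → Q → ℝ)
    (z : Q × Y × (D → Bool)) : ℝ :=
  ∑ d ∈ Dq z.1, lam d z.1 *
    (((if z.2.2 d then 1 else 0) - expectedBias π β d z.1) / expectedBias π α d z.1)

theorem sum_stepWeight {P : Q → ℝ} (hP : ∑ q, P q = 1) {π : Q → Y → ℝ}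
    (hπ : ∀ q, ∑ y, π q y = 1) (α β : D → Y → Q → ℝ) (r : D → Q → ℝ) :
    ∑ z, stepWeight P π α β r z = 1 := by
  simp only [stepWeight, Fintype.sum_prod_type, ← mul_sum,
    sum_pi_prod_eq_one fun d => sum_bernoulliWeight _, mul_one, hπ, hP]

theorem sum_stepWeight_mul_ioEstimate (P : Q → ℝ) (Dq : Q → Finset D) {π : Q → Y → ℝ}
    (hπ : ∀ q, ∑ y, π q y = 1) (α β : D → Y → Q → ℝ) (r lam : D → Q → ℝ)
    (hα : ∀ q, ∀ d ∈ Dq q, expectedBias π α d q ≠ 0) :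
    ∑ z, stepWeight P π α β r z * ioEstimate Dq π α β lam z
      = ∑ q, P q * ∑ d ∈ Dq q, lam d q * r d q := by
  have clicks : ∀ q y, ∑ c : D → Bool,
      (∏ d, bernoulliWeight (clickProb α β r d y q) (c d)) * ioEstimate Dq π α β lam (q, y, c)
        = ∑ d ∈ Dq q, lam d q * ((clickProb α β r d y q - expectedBias π β d q) /
            expectedBias π α d q) := fun q y => by
    refine (sum_pi_prod_mul_sum_apply (fun d => sum_bernoulliWeight _) (Dq q) fun d b =>
      lam d q * (((if b then 1 else 0) - expectedBias π β d q) / expectedBias π α d q)).trans ?_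
    exact sum_congr rfl fun d _ => sum_bernoulliWeight_mul_indicator _ _ _ _
  have rankings : ∀ q, ∀ d ∈ Dq q, ∑ y, π q y * (lam d q * ((clickProb α β r d y q -
      expectedBias π β d q) / expectedBias π α d q)) = lam d q * r d q := fun q d hd => by
    simp_rw [mul_left_comm (π q _), ← mul_sum]
    exact congrArg (lam d q * ·) (sum_mul_affine_sub_div (hπ q) _ _ (hα q d hd) _)
  simp only [Fintype.sum_prod_type, stepWeight, mul_assoc, ← mul_sum, clicks]
  refine sum_congr rfl fun q _ => congrArg (P q * ·) ?_
  simp_rw [mul_sum]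
  rw [sum_comm]
  exact sum_congr rfl (rankings q)

end TrustBias

theorem intervention_oblivious_estimator_unbiased_general
    {Q D Y : Type*} [Fintype Q] [Fintype D] [DecidableEq D] [Fintype Y]
    (T : ℕ) (hT : 0 < T)
    (P : Q → ℝ) (hP1 : ∑ q, P q = 1)
    (Dq : Q → Finset D)
    (π : Fin T → Q → Y → ℝ)
    (hπ1 : ∀ t q, ∑ y, π t q y = 1)
    (α β : D → Y → Q → ℝ) (r : D → Q → ℝ)
    (lam : D → Q → ℝ)
    (hα : ∀ (t : Fin T) (q : Q), ∀ d ∈ Dq q, ∑ y, π t q y * α d y q ≠ 0) :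
    -- expectation over queries qs, displayed rankings ys, and clicks cs
    (∑ qs : Fin T → Q, ∑ ys : Fin T → Y, ∑ cs : Fin T → D → Bool,
      (∏ t, (P (qs t) * π t (qs t) (ys t) *
          ∏ d, (if cs t d
                then α d (ys t) (qs t) * r d (qs t) + β d (ys t) (qs t)
                else 1 - (α d (ys t) (qs t) * r d (qs t) + β d (ys t) (qs t))))) *
        -- the intervention-oblivious estimate of the reward
        ((1 / (T : ℝ)) * ∑ t, ∑ d ∈ Dq (qs t),
          lam d (qs t) *
            (((if cs t d then (1 : ℝ) else 0) - ∑ y, π t (qs t) y * β d y (qs t)) /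
              (∑ y, π t (qs t) y * α d y (qs t)))))
      -- equals the true reward
      = ∑ q, P q * ∑ d ∈ Dq q, lam d q * r d q := by
  have key := sum_pi_prod_mul_average hT (fun t => sum_stepWeight hP1 (hπ1 t) α β r)
    (fun t => sum_stepWeight_mul_ioEstimate P Dq (hπ1 t) α β r lam (hα t))
  rw [Fintype.sum_arrow_prod_prod_type] at key
  exact key

/-- (Unbiasedness of the intervention-oblivious estimator.)
Over `T` timesteps with logging policies `π_1, …, π_T` (interventions may occur), assuming
`E_ȳ[α_d | π_t, q] ≠ 0` for every timestep `t`, query `q`, and item `d ∈ D_q`, the expected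
value of the estimated reward
`R̂_IO(π | D) = (1/T) Σ_t Σ_{d ∈ D_{q_t}} λ(d | q_t)·(c_t(d) − E_ȳ[β_d | π_t, q_t]) / E_ȳ[α_d | π_t, q_t]`,
taken over the i.i.d. queries `q_t ~ P`, the rankings `ȳ_t ~ π_t(·|q_t)`, and the clicks
`c_t` (each item `d` clicked independently with probability `α(d,ȳ_t,q_t)·r(d,q_t) + β(d,ȳ_t,q_t)`),
equals the true reward `R(π) = Σ_q P(q) Σ_{d ∈ D_q} λ(d | q)·r(d,q)`. -/
theorem intervention_oblivious_estimator_unbiased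
    {Q D Y : Type*} [Fintype Q] [Fintype D] [DecidableEq D] [Fintype Y]
    (T : ℕ) (hT : 0 < T)
    (P : Q → ℝ) (hP0 : ∀ q, 0 ≤ P q) (hP1 : ∑ q, P q = 1)
    (Dq : Q → Finset D)
    (π : Fin T → Q → Y → ℝ)
    (hπ0 : ∀ t q y, 0 ≤ π t q y) (hπ1 : ∀ t q, ∑ y, π t q y = 1)
    (α β : D → Y → Q → ℝ) (r : D → Q → ℝ)
    (hr : ∀ d q, 0 ≤ r d q ∧ r d q ≤ 1)
    (hclick : ∀ d y q,
      0 ≤ α d y q * r d q + β d y q ∧ α d y q * r d q + β d y q ≤ 1)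
    (lam : D → Q → ℝ)
    (hα : ∀ (t : Fin T) (q : Q), ∀ d ∈ Dq q, ∑ y, π t q y * α d y q ≠ 0) :
    -- expectation over queries qs, displayed rankings ys, and clicks cs
    (∑ qs : Fin T → Q, ∑ ys : Fin T → Y, ∑ cs : Fin T → D → Bool,
      (∏ t, (P (qs t) * π t (qs t) (ys t) *
          ∏ d, (if cs t d
                then α d (ys t) (qs t) * r d (qs t) + β d (ys t) (qs t)
                else 1 - (α d (ys t) (qs t) * r d (qs t) + β d (ys t) (qs t))))) *
        -- the intervention-oblivious estimate of the reward
        ((1 / (T : ℝ)) * ∑ t, ∑ d ∈ Dq (qs t),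
          lam d (qs t) *
            (((if cs t d then (1 : ℝ) else 0) - ∑ y, π t (qs t) y * β d y (qs t)) /
              (∑ y, π t (qs t) y * α d y (qs t)))))
      -- equals the true reward
      = ∑ q, P q * ∑ d ∈ Dq q, lam d q * r d q :=
  intervention_oblivious_estimator_unbiased_general T hT P hP1 Dq π hπ1 α β r lam hα
end

section
/- Under the trust-bias click model, the intervention-aware per-click correction is an unbiased indicator of relevance: for any set of logging policies Π_T = {π_1, …, π_T} and item d with E_{t,ȳ}[α_d | Π_T] ≠ 0, the expectation over a uniformly random timestep t, the displayed ranking ȳ ~ π_t, and the (Bernoulli) click c(d) of the quantity (c(d) − E_{t,ȳ}[β_d | Π_T]) / E_{t,ȳ}[α_d | Π_T] equals r(d). -/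
/-!
Conditioned on the displayed ranking `y`, the click is Bernoulli with parameter
`α d y * r d + β d y`, and the correction is affine in the click, so its conditional mean is
`(α d y * r d + β d y - B) / A`. Averaging over the mixture of the logging policies is linear and
turns `α d` and `β d` into their means `A` and `B`, leaving `(A * r d + B - B) / A = r d`.
-/

open Finset

/-- `E_{t,ȳ}[f | Π_T]` in the notation of the paper. -/
noncomputable def mixtureMean {Y : Type*} [Fintype Y] {T : ℕ} (π : Fin T → Y → ℝ)
    (f : Y → ℝ) : ℝ :=
  (1 / (T : ℝ)) * ∑ t, ∑ y, π t y * f y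

lemma bernoulli_mean_sub_div (p a b : ℝ) :
    p * ((1 - b) / a) + (1 - p) * ((0 - b) / a) = (p - b) / a := by
  ring

section mixtureMean

variable {Y : Type*} [Fintype Y] {T : ℕ} (π : Fin T → Y → ℝ)

lemma mixtureMean_mul_add (f g : Y → ℝ) (c : ℝ) :
    mixtureMean π (fun y => f y * c + g y) = mixtureMean π f * c + mixtureMean π g := by
  simp only [mixtureMean, mul_add, sum_add_distrib, ← mul_assoc, ← sum_mul]

lemma mixtureMean_const (hT : T ≠ 0) (hπ : ∀ t, ∑ y, π t y = 1) (c : ℝ) :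
    mixtureMean π (fun _ => c) = c := by
  simp only [mixtureMean, ← sum_mul, hπ, sum_const, card_univ, Fintype.card_fin, nsmul_eq_mul,
    mul_one]
  field_simp

lemma mixtureMean_sub_div (hT : T ≠ 0) (hπ : ∀ t, ∑ y, π t y = 1) (f : Y → ℝ) (a b : ℝ) :
    mixtureMean π (fun y => (f y - b) / a) = (mixtureMean π f - b) / a := by
  have hsplit : (fun y => (f y - b) / a) = fun y => f y * a⁻¹ + -b / a := by
    ext y
    ring
  rw [hsplit, mixtureMean_mul_add, mixtureMean_const π hT hπ]
  ring

end mixtureMean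

theorem intervention_aware_correction_unbiased_general
    {D Y : Type*} [Fintype Y]
    (T : ℕ)
    (π : Fin T → Y → ℝ)
    (hπ1 : ∀ t, ∑ y, π t y = 1)
    (α β : D → Y → ℝ) (r : D → ℝ)
    (d : D)
    (hα : (1 / (T : ℝ)) * ∑ t, ∑ y, π t y * α d y ≠ 0) :
    (1 / (T : ℝ)) * ∑ t, ∑ y, π t y *
        ((α d y * r d + β d y) *
            ((1 - (1 / (T : ℝ)) * ∑ t', ∑ y', π t' y' * β d y') /
              ((1 / (T : ℝ)) * ∑ t', ∑ y', π t' y' * α d y')) +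
          (1 - (α d y * r d + β d y)) *
            ((0 - (1 / (T : ℝ)) * ∑ t', ∑ y', π t' y' * β d y') /
              ((1 / (T : ℝ)) * ∑ t', ∑ y', π t' y' * α d y')))
      = r d := by
  -- with no logging policies every mean is `0`
  have hT : T ≠ 0 := by
    rintro rfl
    simp at hα
  simp_rw [bernoulli_mean_sub_div]
  change mixtureMean π (fun y => (α d y * r d + β d y - mixtureMean π (β d)) /
    mixtureMean π (α d)) = r d
  rw [mixtureMean_sub_div π hT hπ1, mixtureMean_mul_add, add_sub_cancel_right]
  exact mul_div_cancel_left₀ _ hα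

/-- The intervention-aware per-click correction
`(c(d) − E_{t,ȳ}[β_d | Π_T]) / E_{t,ȳ}[α_d | Π_T]` is an unbiased indicator of relevance:
its expectation over a uniformly random timestep `t`, the displayed ranking `ȳ ~ π_t`, and
the Bernoulli click `c(d)` equals `r(d)`. -/
theorem intervention_aware_correction_unbiased
    {D Y : Type*} [Fintype D] [Fintype Y]
    (T : ℕ) (hT : 0 < T)
    (π : Fin T → Y → ℝ)
    (hπ0 : ∀ t y, 0 ≤ π t y) (hπ1 : ∀ t, ∑ y, π t y = 1)
    (α β : D → Y → ℝ) (r : D → ℝ)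
    (hr : ∀ d, 0 ≤ r d ∧ r d ≤ 1)
    (hclick : ∀ d y, 0 ≤ α d y * r d + β d y ∧ α d y * r d + β d y ≤ 1)
    (d : D)
    (hα : (1 / (T : ℝ)) * ∑ t, ∑ y, π t y * α d y ≠ 0) :
    (1 / (T : ℝ)) * ∑ t, ∑ y, π t y *
        ((α d y * r d + β d y) *
            ((1 - (1 / (T : ℝ)) * ∑ t', ∑ y', π t' y' * β d y') /
              ((1 / (T : ℝ)) * ∑ t', ∑ y', π t' y' * α d y')) +
          (1 - (α d y * r d + β d y)) *
            ((0 - (1 / (T : ℝ)) * ∑ t', ∑ y', π t' y' * β d y') /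
              ((1 / (T : ℝ)) * ∑ t', ∑ y', π t' y' * α d y')))
      = r d :=
  intervention_aware_correction_unbiased_general T π hπ1 α β r d hα
end

section
/- (Unbiasedness of the intervention-aware estimator.) Consider T timesteps with logging policies Π_T = {π_1, …, π_T} (possibly all distinct, i.e., online interventions may occur). Assume that for every query q and every item d ∈ D_q, the expected bias parameter E_{t,ȳ}[α_d | Π_T, q] = (1/T) Σ_{t=1}^T Σ_y π_t(y | q)·α(d,y,q) is nonzero. Then the expected value of the estimated reward R̂_IA(π | D) = (1/T) Σ_{t=1}^T Σ_{d ∈ D_{q_t}} λ(d | q_t) · (c_t(d) − E_{t,ȳ}[β_d | Π_T, q_t]) / E_{t,ȳ}[α_d | Π_T, q_t], taken over the i.i.d. queries q_t ~ P(q), the displayed rankings ȳ_t ~ π_t(· | q_t), and the clicks c_t, equals the true reward R(π) = Σ_q P(q) Σ_{d ∈ D_q} λ(d | q) · r(d, q). -/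
lemma sum_prod_one {ι X : Type*} [Fintype ι] [Fintype X] [DecidableEq ι]
    (w : ι → X → ℝ) (hw : ∀ i, ∑ x, w i x = 1) :
    ∑ f : ι → X, ∏ i, w i (f i) = 1 := by
  rw [← Fintype.prod_sum]
  simp [hw]

lemma sum_prod_eval {ι X : Type*} [Fintype ι] [Fintype X] [DecidableEq ι]
    (w : ι → X → ℝ) (hw : ∀ i, ∑ x, w i x = 1) (i₀ : ι) (g : X → ℝ) :
    ∑ f : ι → X, (∏ i, w i (f i)) * g (f i₀) = ∑ x, w i₀ x * g x := by
  have h1 : ∀ f : ι → X, (∏ i, w i (f i)) * g (f i₀)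
      = ∏ i, (if i = i₀ then w i (f i) * g (f i) else w i (f i)) := by
    intro f
    rw [Fintype.prod_eq_mul_prod_compl i₀ (fun i => w i (f i)),
        Fintype.prod_eq_mul_prod_compl i₀ (fun i => if i = i₀ then w i (f i) * g (f i) else w i (f i))]
    rw [if_pos rfl, Finset.prod_congr rfl (fun i hi => if_neg (by simpa using hi))]
    ring
  simp_rw [h1]
  rw [← Fintype.prod_sum (fun i x => if i = i₀ then w i x * g x else w i x),
    Fintype.prod_eq_mul_prod_compl i₀ (fun i => ∑ x, if i = i₀ then w i x * g x else w i x)]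
  simp only [if_pos rfl]
  rw [Finset.prod_congr rfl (fun i hi => Finset.sum_congr rfl
    (fun x _ => if_neg (by simpa using hi)))]
  simp [hw]

lemma sum_prod_sum {ι X : Type*} [Fintype ι] [Fintype X] [DecidableEq ι]
    (w : ι → X → ℝ) (hw : ∀ i, ∑ x, w i x = 1) (g : ι → X → ℝ) :
    ∑ f : ι → X, (∏ i, w i (f i)) * ∑ i, g i (f i) = ∑ i, ∑ x, w i x * g i x := by
  simp_rw [Finset.mul_sum]
  rw [Finset.sum_comm]
  exact Finset.sum_congr rfl fun i _ => sum_prod_eval w hw i (g i)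

def tripleEquiv {ι A B C : Type*} : ((ι → A) × (ι → B) × (ι → C)) ≃ (ι → A × B × C) where
  toFun z t := (z.1 t, z.2.1 t, z.2.2 t)
  invFun F := (fun t => (F t).1, fun t => (F t).2.1, fun t => (F t).2.2)
  left_inv z := rfl
  right_inv F := rfl

/-- (Unbiasedness of the intervention-aware estimator.)
Over `T` timesteps with logging policies `Π_T = {π_1, …, π_T}` (interventions may occur),
assuming `E_{t,ȳ}[α_d | Π_T, q] = (1/T) Σ_t Σ_y π_t(y|q)·α(d,y,q) ≠ 0` for every query `q`
and item `d ∈ D_q`, the expected value of the estimated reward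
`R̂_IA(π | D) = (1/T) Σ_t Σ_{d ∈ D_{q_t}} λ(d | q_t)·(c_t(d) − E_{t,ȳ}[β_d | Π_T, q_t]) / E_{t,ȳ}[α_d | Π_T, q_t]`,
taken over the i.i.d. queries `q_t ~ P`, the rankings `ȳ_t ~ π_t(·|q_t)`, and the clicks
`c_t` (each item `d` clicked independently with probability `α(d,ȳ_t,q_t)·r(d,q_t) + β(d,ȳ_t,q_t)`),
equals the true reward `R(π) = Σ_q P(q) Σ_{d ∈ D_q} λ(d | q)·r(d,q)`. -/
theorem intervention_aware_estimator_unbiased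
    {Q D Y : Type*} [Fintype Q] [Fintype D] [DecidableEq D] [Fintype Y]
    (T : ℕ) (hT : 0 < T)
    (P : Q → ℝ) (hP0 : ∀ q, 0 ≤ P q) (hP1 : ∑ q, P q = 1)
    (Dq : Q → Finset D)
    (π : Fin T → Q → Y → ℝ)
    (hπ0 : ∀ t q y, 0 ≤ π t q y) (hπ1 : ∀ t q, ∑ y, π t q y = 1)
    (α β : D → Y → Q → ℝ) (r : D → Q → ℝ)
    (hr : ∀ d q, 0 ≤ r d q ∧ r d q ≤ 1)
    (hclick : ∀ d y q,
      0 ≤ α d y q * r d q + β d y q ∧ α d y q * r d q + β d y q ≤ 1)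
    (lam : D → Q → ℝ)
    (hα : ∀ (q : Q), ∀ d ∈ Dq q,
      (1 / (T : ℝ)) * ∑ t, ∑ y, π t q y * α d y q ≠ 0) :
    -- expectation over queries qs, displayed rankings ys, and clicks cs
    (∑ qs : Fin T → Q, ∑ ys : Fin T → Y, ∑ cs : Fin T → D → Bool,
      (∏ t, (P (qs t) * π t (qs t) (ys t) *
          ∏ d, (if cs t d
                then α d (ys t) (qs t) * r d (qs t) + β d (ys t) (qs t)
                else 1 - (α d (ys t) (qs t) * r d (qs t) + β d (ys t) (qs t))))) *
        -- the intervention-aware estimate of the reward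
        ((1 / (T : ℝ)) * ∑ t, ∑ d ∈ Dq (qs t),
          lam d (qs t) *
            (((if cs t d then (1 : ℝ) else 0)
                - (1 / (T : ℝ)) * ∑ t', ∑ y, π t' (qs t) y * β d y (qs t)) /
              ((1 / (T : ℝ)) * ∑ t', ∑ y, π t' (qs t) y * α d y (qs t)))))
      -- equals the true reward
      = ∑ q, P q * ∑ d ∈ Dq q, lam d q * r d q := by
  
  classical
  have hT' : (T : ℝ) ≠ 0 := Nat.cast_ne_zero.mpr hT.ne'
  -- abbreviations
  set p : D → Y → Q → ℝ := fun d y q => α d y q * r d q + β d y q with hp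
  set Ea : D → Q → ℝ := fun d q => (1 / (T : ℝ)) * ∑ t', ∑ y, π t' q y * α d y q with hEa
  set Eb : D → Q → ℝ := fun d q => (1 / (T : ℝ)) * ∑ t', ∑ y, π t' q y * β d y q with hEb
  set w : Fin T → (Q × Y × (D → Bool)) → ℝ := fun t x =>
    P x.1 * π t x.1 x.2.1 * ∏ d, (if x.2.2 d then p d x.2.1 x.1 else 1 - p d x.2.1 x.1) with hwdef
  set g : Fin T → (Q × Y × (D → Bool)) → ℝ := fun t x =>
    ∑ d ∈ Dq x.1, lam d x.1 *
      (((if x.2.2 d then (1 : ℝ) else 0) - Eb d x.1) / Ea d x.1) with hgdef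
  -- click-model weights sum to one per item
  have hB : ∀ (y : Y) (q : Q) (d : D),
      ∑ b : Bool, (if b then p d y q else 1 - p d y q) = 1 := by
    intro y q d
    rw [Fintype.sum_bool]
    simp
  -- each w t is a probability distribution
  have hw : ∀ t, ∑ x : Q × Y × (D → Bool), w t x = 1 := by
    intro t
    rw [Fintype.sum_prod_type]
    have : ∀ q : Q, (∑ x : Y × (D → Bool), w t (q, x)) = P q := by
      intro q
      rw [Fintype.sum_prod_type]
      have hc : ∀ y : Y, (∑ c : D → Bool,
          ∏ d, (if c d then p d y q else 1 - p d y q)) = 1 :=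
        fun y => sum_prod_one (fun (d : D) (b : Bool) => if b then p d y q else 1 - p d y q)
          (fun d => hB y q d)
      calc ∑ y : Y, ∑ c : D → Bool, w t (q, y, c)
          = ∑ y : Y, P q * π t q y * ∑ c : D → Bool,
              ∏ d, (if c d then p d y q else 1 - p d y q) := by
            refine Finset.sum_congr rfl fun y _ => ?_
            rw [Finset.mul_sum]
        _ = ∑ y : Y, P q * π t q y := by
            refine Finset.sum_congr rfl fun y _ => by rw [hc y, mul_one]
        _ = P q := by rw [← Finset.mul_sum, hπ1 t q, mul_one]
    rw [Finset.sum_congr rfl fun q _ => this q, hP1]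
  -- Step 1: rewrite LHS as a single sum over trajectories
  have step1 :
      (∑ qs : Fin T → Q, ∑ ys : Fin T → Y, ∑ cs : Fin T → D → Bool,
        (∏ t, (P (qs t) * π t (qs t) (ys t) *
            ∏ d, (if cs t d
                  then α d (ys t) (qs t) * r d (qs t) + β d (ys t) (qs t)
                  else 1 - (α d (ys t) (qs t) * r d (qs t) + β d (ys t) (qs t))))) *
          ((1 / (T : ℝ)) * ∑ t, ∑ d ∈ Dq (qs t),
            lam d (qs t) *
              (((if cs t d then (1 : ℝ) else 0)
                  - (1 / (T : ℝ)) * ∑ t', ∑ y, π t' (qs t) y * β d y (qs t)) /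
                ((1 / (T : ℝ)) * ∑ t', ∑ y, π t' (qs t) y * α d y (qs t)))))
      = ∑ F : Fin T → Q × Y × (D → Bool),
          (∏ t, w t (F t)) * ((1 / (T : ℝ)) * ∑ t, g t (F t)) := by
    rw [← Equiv.sum_comp (tripleEquiv (ι := Fin T) (A := Q) (B := Y) (C := D → Bool))
      (fun F : Fin T → Q × Y × (D → Bool) =>
      (∏ t, w t (F t)) * ((1 / (T : ℝ)) * ∑ t, g t (F t)))]
    simp only [tripleEquiv, Equiv.coe_fn_mk, Fintype.sum_prod_type, hwdef, hgdef, hp, hEa, hEb]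
  rw [step1]
  -- Step 2: swap expectation and sum over timesteps
  have step2 : (∑ F : Fin T → Q × Y × (D → Bool),
      (∏ t, w t (F t)) * ((1 / (T : ℝ)) * ∑ t, g t (F t)))
      = (1 / (T : ℝ)) * ∑ t, ∑ x : Q × Y × (D → Bool), w t x * g t x := by
    have hF : ∀ F : Fin T → Q × Y × (D → Bool),
        (∏ t, w t (F t)) * ((1 / (T : ℝ)) * ∑ t, g t (F t))
        = (1 / (T : ℝ)) * ((∏ t, w t (F t)) * ∑ t, g t (F t)) := fun F => by ring
    simp_rw [hF]
    rw [← Finset.mul_sum, sum_prod_sum w hw g]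
  rw [step2]
  -- expectation over clicks
  have hclicksum : ∀ (q : Q) (y : Y),
      (∑ c : D → Bool, (∏ d, (if c d then p d y q else 1 - p d y q)) *
        ∑ d ∈ Dq q, lam d q * (((if c d then (1 : ℝ) else 0) - Eb d q) / Ea d q))
      = ∑ d ∈ Dq q, lam d q * ((p d y q - Eb d q) / Ea d q) := by
    intro q y
    simp_rw [Finset.mul_sum]
    rw [Finset.sum_comm]
    refine Finset.sum_congr rfl fun d _ => ?_
    refine Eq.trans (sum_prod_eval (fun (d' : D) (b : Bool) => if b then p d' y q else 1 - p d' y q)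
      (fun d' => hB y q d') d
      (fun b => lam d q * (((if b then (1 : ℝ) else 0) - Eb d q) / Ea d q))) ?_
    rw [Fintype.sum_bool]
    norm_num
    ring
  -- Step 3: per-timestep expectation
  have step3 : ∀ t, (∑ x : Q × Y × (D → Bool), w t x * g t x)
      = ∑ q, P q * ∑ y, π t q y *
          ∑ d ∈ Dq q, lam d q * ((p d y q - Eb d q) / Ea d q) := by
    intro t
    rw [Fintype.sum_prod_type]
    refine Finset.sum_congr rfl fun q _ => ?_
    rw [Fintype.sum_prod_type]
    have hy : ∀ y : Y, (∑ c : D → Bool, w t (q, y, c) * g t (q, y, c))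
        = P q * (π t q y * ∑ d ∈ Dq q, lam d q * ((p d y q - Eb d q) / Ea d q)) := by
      intro y
      have hc : ∀ c : D → Bool, w t (q, y, c) * g t (q, y, c)
          = (P q * π t q y) *
            ((∏ d, (if c d then p d y q else 1 - p d y q)) *
              ∑ d ∈ Dq q, lam d q * (((if c d then (1 : ℝ) else 0) - Eb d q) / Ea d q)) := by
        intro c
        simp only [hwdef, hgdef]
        ring
      rw [Finset.sum_congr rfl fun c _ => hc c, ← Finset.mul_sum, hclicksum q y, mul_assoc]
    rw [Finset.sum_congr rfl fun y _ => hy y, ← Finset.mul_sum]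
  rw [Finset.sum_congr rfl fun t _ => step3 t]
  -- Step 4: final rearrangement and average over timesteps
  rw [Finset.sum_comm, Finset.mul_sum]
  refine Finset.sum_congr rfl fun q _ => ?_
  rw [← Finset.mul_sum, mul_left_comm]
  congr 1
  -- goal: (1/T) * ∑ t, ∑ y, π t q y * ∑ d ∈ Dq q, ... = ∑ d ∈ Dq q, lam d q * r d q
  have hswap : (∑ t : Fin T, ∑ y, π t q y *
        ∑ d ∈ Dq q, lam d q * ((p d y q - Eb d q) / Ea d q))
      = ∑ d ∈ Dq q, ∑ t : Fin T, ∑ y,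
          π t q y * (lam d q * ((p d y q - Eb d q) / Ea d q)) := by
    simp_rw [Finset.mul_sum]
    have h1 : ∀ t : Fin T, (∑ y : Y, ∑ d ∈ Dq q,
        π t q y * (lam d q * ((p d y q - Eb d q) / Ea d q)))
        = ∑ d ∈ Dq q, ∑ y : Y, π t q y * (lam d q * ((p d y q - Eb d q) / Ea d q)) :=
      fun t => Finset.sum_comm
    rw [Finset.sum_congr rfl fun t _ => h1 t, Finset.sum_comm]
  rw [hswap, Finset.mul_sum]
  refine Finset.sum_congr rfl fun d hd => ?_
  have hTsum : (∑ t : Fin T, ∑ y, π t q y) = (T : ℝ) := by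
    simp [hπ1]
  have expand : (∑ t : Fin T, ∑ y, π t q y * (lam d q * ((p d y q - Eb d q) / Ea d q)))
      = (lam d q / Ea d q * r d q) * (∑ t : Fin T, ∑ y, π t q y * α d y q)
        + (lam d q / Ea d q) * (∑ t : Fin T, ∑ y, π t q y * β d y q)
        - (lam d q / Ea d q * Eb d q) * (T : ℝ) := by
    calc (∑ t : Fin T, ∑ y, π t q y * (lam d q * ((p d y q - Eb d q) / Ea d q)))
        = ∑ t : Fin T, ∑ y,
            ((lam d q / Ea d q * r d q) * (π t q y * α d y q)
              + (lam d q / Ea d q) * (π t q y * β d y q)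
              - (lam d q / Ea d q * Eb d q) * π t q y) := by
          refine Finset.sum_congr rfl fun t _ => Finset.sum_congr rfl fun y _ => ?_
          simp only [hp]
          ring
      _ = _ := by
          simp only [Finset.sum_add_distrib, Finset.sum_sub_distrib, ← Finset.mul_sum]
          rw [hTsum]
  rw [expand]
  have hA : Ea d q = (1 / (T : ℝ)) * ∑ t' : Fin T, ∑ y, π t' q y * α d y q := rfl
  have hBq : Eb d q = (1 / (T : ℝ)) * ∑ t' : Fin T, ∑ y, π t' q y * β d y q := rfl
  have hne : Ea d q ≠ 0 := hα q d hd
  set A := ∑ t' : Fin T, ∑ y, π t' q y * α d y q with hAdef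
  set B := ∑ t' : Fin T, ∑ y, π t' q y * β d y q with hBdef
  rw [hA, hBq]
  have hAne : A ≠ 0 := fun h0 => hα q d hd (by rw [← hAdef, h0, mul_zero])
  field_simp
  ring
end

section
/- (Unbiasedness of the inverse-propensity-scoring estimator under position bias without trust bias.) Under the position-bias click model P(C=1 | d, y) = θ(d,y)·r(d), suppose that for every item d with r(d) > 0 and every ranking ȳ with π(ȳ) > 0 we have θ(d,ȳ) > 0, and adopt the convention x/0 = 0. Then the IPS per-click correction is an unbiased indicator of relevance: the expectation over the displayed ranking ȳ ~ π and the (Bernoulli) click c(d) of c(d) / θ(d,ȳ) equals r(d), and hence for any weights λ : D → ℝ the expectation of Σ_{d ∈ D} λ(d)·c(d)/θ(d,ȳ) equals Σ_{d ∈ D} λ(d)·r(d). -/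
lemma bern_sum {D : Type*} [Fintype D] [DecidableEq D] (w : D → Bool → ℝ)
    (hw : ∀ d, w d true + w d false = 1) (f : D → Bool → ℝ) :
    ∑ c : D → Bool, (∏ d, w d (c d)) * ∑ d, f d (c d)
      = ∑ d, (w d true * f d true + w d false * f d false) := by
  simp_rw [Finset.mul_sum]
  rw [Finset.sum_comm]
  refine Finset.sum_congr rfl fun d _ => ?_
  have hd : ∀ g : D → ℝ, ∏ e, g e = g d * ∏ e ∈ {d}ᶜ, g e := by
    intro g
    rw [← Finset.prod_mul_prod_compl {d} g, Finset.prod_singleton]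
  have h1 : ∀ c : D → Bool, (∏ e, w e (c e)) * f d (c d)
      = ∏ e, (fun e b => if e = d then w e b * f d b else w e b) e (c e) := by
    intro c
    rw [hd (fun e => w e (c e)),
        hd (fun e => (fun e b => if e = d then w e b * f d b else w e b) e (c e))]
    simp only [if_pos rfl]
    rw [Finset.prod_congr rfl (fun e he => ?_)]
    · simp only [if_true]; ring
    · simp only [Finset.mem_compl, Finset.mem_singleton] at he
      simp [he]
  simp_rw [h1]
  rw [← Fintype.prod_sum (fun e b => if e = d then w e b * f d b else w e b)]
  have h2 : ∀ e : D, (∑ b : Bool, (if e = d then w e b * f d b else w e b))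
      = if e = d then w d true * f d true + w d false * f d false else 1 := by
    intro e
    by_cases he : e = d
    · simp [he, Fintype.sum_bool]
    · simp only [he, if_false, Fintype.sum_bool]
      linarith [hw e]
  simp_rw [h2]
  simp


/-- (Unbiasedness of the IPS estimator under position bias without trust bias.)
Under the position-bias click model `P(C=1 | d, y) = θ(d,y)·r(d)`, if for every item `d` with
`r(d) > 0` and every ranking `ȳ` with `π(ȳ) > 0` we have `θ(d,ȳ) > 0` (with the convention
`x/0 = 0`, which is Lean's default), then the IPS per-click correction `c(d)/θ(d,ȳ)` is an
unbiased indicator of relevance, and hence for any weights `λ : D → ℝ` the expectation of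
`Σ_{d ∈ D} λ(d)·c(d)/θ(d,ȳ)` (over `ȳ ~ π` and the jointly independent clicks) equals
`Σ_{d ∈ D} λ(d)·r(d)`. -/
theorem ips_estimator_unbiased
    {D Y : Type*} [Fintype D] [DecidableEq D] [Fintype Y]
    (π : Y → ℝ) (hπ0 : ∀ y, 0 ≤ π y) (hπ1 : ∑ y, π y = 1)
    (θ : D → Y → ℝ) (hθ : ∀ d y, 0 ≤ θ d y ∧ θ d y ≤ 1)
    (r : D → ℝ) (hr : ∀ d, 0 ≤ r d ∧ r d ≤ 1)
    (hpos : ∀ d, 0 < r d → ∀ y, 0 < π y → 0 < θ d y) :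
    (∀ d : D,
      ∑ y, π y *
          ((θ d y * r d) * (1 / θ d y) + (1 - θ d y * r d) * (0 / θ d y))
        = r d) ∧
    (∀ lam : D → ℝ,
      ∑ y, π y *
          ∑ c : D → Bool,
            (∏ d, (if c d then θ d y * r d else 1 - θ d y * r d)) *
              ∑ d, lam d * ((if c d then (1 : ℝ) else 0) / θ d y)
        = ∑ d, lam d * r d) := by
  have h1 : ∀ d : D,
      ∑ y, π y * ((θ d y * r d) * (1 / θ d y) + (1 - θ d y * r d) * (0 / θ d y)) = r d := by
    intro d
    rcases eq_or_lt_of_le (hr d).1 with hrd | hrd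
    · simp [← hrd]
    · have : ∀ y, π y * ((θ d y * r d) * (1 / θ d y) + (1 - θ d y * r d) * (0 / θ d y))
          = π y * r d := by
        intro y
        rcases eq_or_lt_of_le (hπ0 y) with hy | hy
        · rw [← hy]; ring
        · have hθy := hpos d hrd y hy
          rw [zero_div, mul_zero, add_zero]
          field_simp
      simp_rw [this, ← Finset.sum_mul, hπ1, one_mul]
  refine ⟨h1, fun lam => ?_⟩
  have h2 : ∀ y : Y,
      (∑ c : D → Bool, (∏ d, (if c d then θ d y * r d else 1 - θ d y * r d)) *
          ∑ d, lam d * ((if c d then (1 : ℝ) else 0) / θ d y))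
        = ∑ d, ((θ d y * r d) * (lam d * (1 / θ d y))
            + (1 - θ d y * r d) * (lam d * (0 / θ d y))) := by
    intro y
    exact bern_sum (fun d b => if b then θ d y * r d else 1 - θ d y * r d)
      (fun d => by simp) (fun d b => lam d * ((if b then (1 : ℝ) else 0) / θ d y))
  simp_rw [h2, Finset.mul_sum]
  rw [Finset.sum_comm]
  refine Finset.sum_congr rfl fun d _ => ?_
  conv_rhs => rw [← h1 d]
  rw [Finset.mul_sum]
  exact Finset.sum_congr rfl fun y _ => by ring
end

section
/- (Unbiasedness of the policy-aware estimator under position bias and item-selection bias without trust bias.) Under the position-bias click model P(C=1 | d, y) = θ(d,y)·r(d), suppose that for every item d with r(d) > 0 the policy-conditioned examination probability E_y[θ_d | π] = Σ_y π(y)·θ(d,y) is strictly positive, and adopt the convention x/0 = 0. Then the policy-aware per-click correction is an unbiased indicator of relevance: the expectation over the displayed ranking ȳ ~ π and the (Bernoulli) click c(d) of c(d) / E_y[θ_d | π] equals r(d), and hence for any weights λ : D → ℝ the expectation of Σ_{d ∈ D} λ(d)·c(d)/E_y[θ_d | π] equals Σ_{d ∈ D} λ(d)·r(d). In particular, individual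 displayed rankings may give some relevant items zero examination probability (item-selection bias), as long as the policy-conditioned examination probability is positive. -/
set_option maxHeartbeats 1000000

lemma bern_single {D : Type*} [Fintype D] [DecidableEq D]
    (w : D → Bool → ℝ) (hw : ∀ d, w d true + w d false = 1)
    (d0 : D) (h : Bool → ℝ) :
    ∑ c : D → Bool, (∏ d, w d (c d)) * h (c d0)
      = w d0 true * h true + w d0 false * h false := by
  have key : ∀ c : D → Bool,
      (∏ d, w d (c d)) * h (c d0)
        = ∏ d, (w d (c d) * (if d = d0 then h (c d) else 1)) := by
    intro c
    rw [Finset.prod_mul_distrib]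
    congr 1
    rw [Finset.prod_ite_eq' Finset.univ d0 (fun d => h (c d))]
    simp
  calc ∑ c : D → Bool, (∏ d, w d (c d)) * h (c d0)
      = ∑ c : D → Bool, ∏ d, (fun d b => w d b * (if d = d0 then h b else 1)) d (c d) := by
        simp only [key]
    _ = ∏ d, ∑ b, w d b * (if d = d0 then h b else 1) :=
        (Fintype.prod_sum (fun d b => w d b * (if d = d0 then h b else 1))).symm
    _ = w d0 true * h true + w d0 false * h false := by
        rw [Finset.prod_eq_single d0]
        · simp
        · intro d _ hd
          simp [hd, hw d]
        · simp

theorem policy_aware_estimator_unbiased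
    {D Y : Type*} [Fintype D] [DecidableEq D] [Fintype Y]
    (π : Y → ℝ) (hπ0 : ∀ y, 0 ≤ π y) (hπ1 : ∑ y, π y = 1)
    (θ : D → Y → ℝ) (hθ : ∀ d y, 0 ≤ θ d y ∧ θ d y ≤ 1)
    (r : D → ℝ) (hr : ∀ d, 0 ≤ r d ∧ r d ≤ 1)
    (hpos : ∀ d, 0 < r d → 0 < ∑ y, π y * θ d y) :
    (∀ d : D,
      ∑ y, π y *
          ((θ d y * r d) * (1 / ∑ y', π y' * θ d y') +
            (1 - θ d y * r d) * (0 / ∑ y', π y' * θ d y'))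
        = r d) ∧
    (∀ lam : D → ℝ,
      ∑ y, π y *
          ∑ c : D → Bool,
            (∏ d, (if c d then θ d y * r d else 1 - θ d y * r d)) *
              ∑ d, lam d * ((if c d then (1 : ℝ) else 0) / ∑ y', π y' * θ d y')
        = ∑ d, lam d * r d) := by
  -- first part
  have h1 : ∀ d : D,
      ∑ y, π y *
          ((θ d y * r d) * (1 / ∑ y', π y' * θ d y') +
            (1 - θ d y * r d) * (0 / ∑ y', π y' * θ d y'))
        = r d := by
    intro d
    rcases eq_or_lt_of_le (hr d).1 with h0 | h0
    · simp [← h0]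
    · have hS := hpos d h0
      have : ∑ y, π y * ((θ d y * r d) * (1 / ∑ y', π y' * θ d y') +
            (1 - θ d y * r d) * (0 / ∑ y', π y' * θ d y'))
          = (∑ y, π y * θ d y) * (r d / ∑ y', π y' * θ d y') := by
        rw [Finset.sum_mul]
        apply Finset.sum_congr rfl
        intro y _
        field_simp
        ring
      rw [this, mul_div_assoc']
      rw [mul_comm, mul_div_assoc, div_self hS.ne', mul_one]
  refine ⟨h1, ?_⟩
  intro lam
  -- second part
  have h2 : ∀ y : Y,
      ∑ c : D → Bool,
          (∏ d, (if c d then θ d y * r d else 1 - θ d y * r d)) *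
            ∑ d, lam d * ((if c d then (1 : ℝ) else 0) / ∑ y', π y' * θ d y')
        = ∑ d, lam d * (θ d y * r d / ∑ y', π y' * θ d y') := by
    intro y
    have swap : ∑ c : D → Bool,
        (∏ d, (if c d then θ d y * r d else 1 - θ d y * r d)) *
          ∑ d, lam d * ((if c d then (1 : ℝ) else 0) / ∑ y', π y' * θ d y')
        = ∑ d, ∑ c : D → Bool,
            (∏ d', (if c d' then θ d' y * r d' else 1 - θ d' y * r d')) *
              (lam d * ((if c d then (1 : ℝ) else 0) / ∑ y', π y' * θ d y')) := by
      rw [Finset.sum_comm]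
      apply Finset.sum_congr rfl
      intro c _
      rw [Finset.mul_sum]
    rw [swap]
    apply Finset.sum_congr rfl
    intro d _
    have := bern_single (fun d' b => if b then θ d' y * r d' else 1 - θ d' y * r d')
      (by intro d'; simp) d
      (fun b => lam d * ((if b then (1 : ℝ) else 0) / ∑ y', π y' * θ d y'))
    simp only [if_true, if_false] at this
    rw [show (∑ c : D → Bool,
        (∏ d', (if c d' then θ d' y * r d' else 1 - θ d' y * r d')) *
          (lam d * ((if c d then (1 : ℝ) else 0) / ∑ y', π y' * θ d y')))
        = ∑ c : D → Bool,
        (∏ d', (fun d' b => if b then θ d' y * r d' else 1 - θ d' y * r d') d' (c d')) *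
          (fun b => lam d * ((if b then (1 : ℝ) else 0) / ∑ y', π y' * θ d y')) (c d) from rfl,
      this]
    simp only [if_pos, if_neg (by simp : ¬ (false = true))]
    ring
  calc ∑ y, π y * ∑ c : D → Bool,
          (∏ d, (if c d then θ d y * r d else 1 - θ d y * r d)) *
            ∑ d, lam d * ((if c d then (1 : ℝ) else 0) / ∑ y', π y' * θ d y')
      = ∑ y, π y * ∑ d, lam d * (θ d y * r d / ∑ y', π y' * θ d y') := by
        exact Finset.sum_congr rfl fun y _ => by rw [h2 y]
    _ = ∑ d, lam d * ∑ y, π y * (θ d y * r d / ∑ y', π y' * θ d y') := by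
        simp_rw [Finset.mul_sum]
        rw [Finset.sum_comm]
        apply Finset.sum_congr rfl
        intro d _
        apply Finset.sum_congr rfl
        intro y _
        ring
    _ = ∑ d, lam d * r d := by
        apply Finset.sum_congr rfl
        intro d _
        congr 1
        have := h1 d
        calc ∑ y, π y * (θ d y * r d / ∑ y', π y' * θ d y')
            = ∑ y, π y * ((θ d y * r d) * (1 / ∑ y', π y' * θ d y') +
                (1 - θ d y * r d) * (0 / ∑ y', π y' * θ d y')) := by
              apply Finset.sum_congr rfl
              intro y _
              rw [zero_div, mul_zero, add_zero, mul_one_div]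
          _ = r d := this
end
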